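/- arXiv:1001.1779 — 2 statements merged into one kernel-verified Lean document; each statement's English description precedes it below -/
import Mathlib

section
/- For all positive integers n, m, l, the identity (id_{M_n(C)} ⊗ φ_{m,l})(R^{(n,ml)}) = R^{(n,l)}_{13} R^{(n,m)}_{12} holds in M_n(C) ⊗ M_m(C) ⊗ M_l(C). -/
/-- The R-matrix R^{(n,m)} on C^n ⊗ C^m (indexed 0-based): it maps the basis
vector e_i ⊗ e_j to e_{i'} ⊗ e_{j'} where m·i + j = n·j' + i'. -/
def Rmat (n m : ℕ) : Matrix (Fin n × Fin m) (Fin n × Fin m) ℂ :=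
  Matrix.of fun p q =>
    if m * (q.1 : ℕ) + (q.2 : ℕ) = n * (p.2 : ℕ) + (p.1 : ℕ) then 1 else 0

/-- The index bijection F_m × F_l → F_{ml} (0-based): (i,j) ↦ l·i + j. -/
def phiIdx {m l : ℕ} (i : Fin m) (j : Fin l) : Fin (m * l) :=
  ⟨l * (i : ℕ) + (j : ℕ), by
    have h1 := i.isLt
    have h2 := j.isLt
    nlinarith⟩

/-- id_{M_n(C)} ⊗ φ_{m,l} applied to y ∈ M_n(C) ⊗ M_{ml}(C), landing in
M_n(C) ⊗ M_m(C) ⊗ M_l(C). -/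
def idTensorPhi (n m l : ℕ)
    (y : Matrix (Fin n × Fin (m * l)) (Fin n × Fin (m * l)) ℂ) :
    Matrix (Fin n × Fin m × Fin l) (Fin n × Fin m × Fin l) ℂ :=
  Matrix.of fun p q =>
    y (p.1, phiIdx p.2.1 p.2.2) (q.1, phiIdx q.2.1 q.2.2)

/-- Leg embedding X ↦ X_{13} : M_n ⊗ M_l → M_n ⊗ M_m ⊗ M_l. -/
def leg13 {n l : ℕ} (m : ℕ) (X : Matrix (Fin n × Fin l) (Fin n × Fin l) ℂ) :
    Matrix (Fin n × Fin m × Fin l) (Fin n × Fin m × Fin l) ℂ :=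
  Matrix.of fun p q =>
    X (p.1, p.2.2) (q.1, q.2.2) * (if p.2.1 = q.2.1 then 1 else 0)

/-- Leg embedding X ↦ X_{12} : M_n ⊗ M_m → M_n ⊗ M_m ⊗ M_l. -/
def leg12 {n m : ℕ} (l : ℕ) (X : Matrix (Fin n × Fin m) (Fin n × Fin m) ℂ) :
    Matrix (Fin n × Fin m × Fin l) (Fin n × Fin m × Fin l) ℂ :=
  Matrix.of fun p q =>
    X (p.1, p.2.1) (q.1, q.2.1) * (if p.2.2 = q.2.2 then 1 else 0)

set_option maxHeartbeats 1000000 in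
/-- For all positive integers n, m, l, the identity
(id_{M_n(C)} ⊗ φ_{m,l})(R^{(n,ml)}) = R^{(n,l)}_{13} R^{(n,m)}_{12}
holds in M_n(C) ⊗ M_m(C) ⊗ M_l(C). -/
theorem stmt_16 (n m l : ℕ) (hn : 0 < n) (hm : 0 < m) (hl : 0 < l) :
    idTensorPhi n m l (Rmat n (m * l)) =
      leg13 m (Rmat n l) * leg12 l (Rmat n m) := by
  ext ⟨p1, p21, p22⟩ ⟨q1, q21, q22⟩
  simp only [idTensorPhi, leg13, leg12, Rmat, phiIdx, Matrix.mul_apply,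
    Matrix.of_apply, mul_ite, mul_one, mul_zero, ite_mul, one_mul, zero_mul]
  have hp1 := p1.isLt; have hq22 := q22.isLt; have hp22 := p22.isLt
  by_cases h : m * l * (q1:ℕ) + (l * (q21:ℕ) + (q22:ℕ)) = n * (l * (p21:ℕ) + (p22:ℕ)) + (p1:ℕ)
  · rw [if_pos h]
    have e1 : l * (m * (q1:ℕ) + q21) + (q22:ℕ) = l * (n * (p21:ℕ)) + (n * (p22:ℕ) + p1) := by
      ring_nf
      ring_nf at h
      linarith [h]
    have hCl : n * (p22:ℕ) + (p1:ℕ) < n * l := by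
      have h1 : n * ((p22:ℕ) + 1) ≤ n * l := Nat.mul_le_mul_left n hp22
      nlinarith [h1]
    have hBA : n * (p21:ℕ) ≤ m * (q1:ℕ) + q21 := by
      by_contra hc
      push_neg at hc
      have h1 : l * (m * (q1:ℕ) + q21 + 1) ≤ l * (n * (p21:ℕ)) := Nat.mul_le_mul_left l hc
      nlinarith [h1, e1, hq22]
    obtain ⟨d, hd⟩ := Nat.exists_eq_add_of_le hBA
    have e2 : l * d + (q22:ℕ) = n * (p22:ℕ) + p1 := by
      rw [hd] at e1
      nlinarith [e1]
    have hdn : d < n := by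
      by_contra hc
      push_neg at hc
      have h1 : l * n ≤ l * d := Nat.mul_le_mul_left l hc
      have h2 : l * n = n * l := Nat.mul_comm l n
      linarith [h1, h2, e2, hCl]
    rw [Finset.sum_eq_single_of_mem ((⟨d, hdn⟩, p21, q22) : Fin n × Fin m × Fin l)
      (Finset.mem_univ _)]
    · simp [e2, hd]
    · rintro ⟨b1, b2, b3⟩ - hb
      simp only
      split_ifs with c1 c2 c3 c4
      · exfalso
        apply hb
        have hb1 : b1 = (⟨d, hdn⟩ : Fin n) := by
          have h9 : l * (b1:ℕ) + (q22:ℕ) = n * (p22:ℕ) + p1 := by rw [← c1]; exact c4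
          have h10 : l * (b1:ℕ) = l * d := by omega
          exact Fin.ext (Nat.eq_of_mul_eq_mul_left hl h10)
        rw [hb1, ← c3, c1]
      all_goals rfl
  · rw [if_neg h]
    symm
    apply Finset.sum_eq_zero
    rintro ⟨b1, b2, b3⟩ -
    simp only
    split_ifs with c1 c2 c3 c4
    · exfalso
      apply h
      have h5 : l * (m * (q1:ℕ) + q21) = l * (n * (p21:ℕ) + b1) := by rw [c3]; rw [c2]
      have h7 : (b3:ℕ) = q22 := by rw [c1]
      nlinarith [h5, c4, h7]
    all_goals rfl
end

section
/- The comultiplication Δ_φ on M_*(C) is not cocommutative: for the matrix unit E_{2,2}^{(6)} ∈ M_6(C), one has Δ_φ(E_{2,2}^{(6)}) = I_1 ⊗ E_{2,2}^{(6)} + E_{1,1}^{(2)} ⊗ E_{2,2}^{(3)} + E_{1,1}^{(3)} ⊗ E_{2,2}^{(2)} + E_{2,2}^{(6)} ⊗ I_1, which differs from its image under the tensor flip. -/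
open Kronecker

/-- The unital *-homomorphism φ_{m,l} : M_{ml}(C) → M_m(C) ⊗ M_l(C), defined
on matrix units by φ_{m,l}(E_{l(i-1)+j, l(i'-1)+j'}) = E_{i,i'} ⊗ E_{j,j'}. -/
def phiMap (m l : ℕ) (x : Matrix (Fin (m * l)) (Fin (m * l)) ℂ) :
    Matrix (Fin m × Fin l) (Fin m × Fin l) ℂ :=
  Matrix.of fun p q => x (phiIdx p.1 p.2) (phiIdx q.1 q.2)

/-- The comultiplication Δ_φ on M_*(C) is not cocommutative:
for the matrix unit E_{2,2}^{(6)} ∈ M_6(C) (0-based: E_{1,1}), its components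
in the factorizations 6 = 1·6 = 2·3 = 3·2 = 6·1 are
φ_{1,6}(E) = I_1 ⊗ E_{2,2}^{(6)},  φ_{2,3}(E) = E_{1,1}^{(2)} ⊗ E_{2,2}^{(3)},
φ_{3,2}(E) = E_{1,1}^{(3)} ⊗ E_{2,2}^{(2)},  φ_{6,1}(E) = E_{2,2}^{(6)} ⊗ I_1,
and Δ_φ(E) differs from its image under the tensor flip: the (2,3)-component
of Δ_φ(E) is not the flip of the (3,2)-component. -/
theorem stmt_18 :
    phiMap 1 6 (Matrix.single ⟨1, by norm_num⟩ ⟨1, by norm_num⟩ 1) =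
        (1 : Matrix (Fin 1) (Fin 1) ℂ) ⊗ₖ
          Matrix.single (1 : Fin 6) 1 (1 : ℂ) ∧
    phiMap 2 3 (Matrix.single ⟨1, by norm_num⟩ ⟨1, by norm_num⟩ 1) =
        Matrix.single (0 : Fin 2) 0 (1 : ℂ) ⊗ₖ
          Matrix.single (1 : Fin 3) 1 (1 : ℂ) ∧
    phiMap 3 2 (Matrix.single ⟨1, by norm_num⟩ ⟨1, by norm_num⟩ 1) =
        Matrix.single (0 : Fin 3) 0 (1 : ℂ) ⊗ₖ
          Matrix.single (1 : Fin 2) 1 (1 : ℂ) ∧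
    phiMap 6 1 (Matrix.single ⟨1, by norm_num⟩ ⟨1, by norm_num⟩ 1) =
        Matrix.single (1 : Fin 6) 1 (1 : ℂ) ⊗ₖ
          (1 : Matrix (Fin 1) (Fin 1) ℂ) ∧
    phiMap 2 3 (Matrix.single ⟨1, by norm_num⟩ ⟨1, by norm_num⟩ 1) ≠
      (phiMap 3 2
          (Matrix.single ⟨1, by norm_num⟩ ⟨1, by norm_num⟩ 1)).submatrix
        Prod.swap Prod.swap := by
  refine ⟨?_, ?_, ?_, ?_, ?_⟩
  · ext ⟨i, j⟩ ⟨i', j'⟩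
    have hi := i.isLt; have hj := j.isLt; have hi' := i'.isLt; have hj' := j'.isLt
    simp only [phiMap, Matrix.of_apply, phiIdx, Matrix.single, Matrix.kroneckerMap_apply,
      Matrix.one_apply, Fin.ext_iff, Fin.val_one, Fin.val_zero, Prod.mk.injEq, Fin.mk.injEq]
    split_ifs <;> try norm_num
    all_goals (exfalso; omega)
  · ext ⟨i, j⟩ ⟨i', j'⟩
    have hi := i.isLt; have hj := j.isLt; have hi' := i'.isLt; have hj' := j'.isLt
    simp only [phiMap, Matrix.of_apply, phiIdx, Matrix.single, Matrix.kroneckerMap_apply,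
      Matrix.one_apply, Fin.ext_iff, Fin.val_one, Fin.val_zero, Prod.mk.injEq, Fin.mk.injEq]
    split_ifs <;> try norm_num
    all_goals (exfalso; omega)
  · ext ⟨i, j⟩ ⟨i', j'⟩
    have hi := i.isLt; have hj := j.isLt; have hi' := i'.isLt; have hj' := j'.isLt
    simp only [phiMap, Matrix.of_apply, phiIdx, Matrix.single, Matrix.kroneckerMap_apply,
      Matrix.one_apply, Fin.ext_iff, Fin.val_one, Fin.val_zero, Prod.mk.injEq, Fin.mk.injEq]
    split_ifs <;> try norm_num
    all_goals (exfalso; omega)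
  · ext ⟨i, j⟩ ⟨i', j'⟩
    have hi := i.isLt; have hj := j.isLt; have hi' := i'.isLt; have hj' := j'.isLt
    simp only [phiMap, Matrix.of_apply, phiIdx, Matrix.single, Matrix.kroneckerMap_apply,
      Matrix.one_apply, Fin.ext_iff, Fin.val_one, Fin.val_zero, Prod.mk.injEq, Fin.mk.injEq]
    split_ifs <;> try norm_num
    all_goals (exfalso; omega)
  · intro h
    have := congrFun (congrFun h ((0 : Fin 2), (1 : Fin 3))) ((0 : Fin 2), (1 : Fin 3))
    simp [phiMap, phiIdx, Matrix.submatrix, Matrix.single, Fin.ext_iff] at this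
end
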